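/- arXiv:1706.01534 — 2 statements merged into one kernel-verified Lean document; each statement's English description precedes it below -/
import Mathlib

section
/- Let (Ω, F, P) be a probability space, let Y : Ω → E be a random variable with values in a standard Borel space E, and let X : Ω → ℝ be a real random variable. Suppose the regular conditional distribution of X given Y is almost surely the Gaussian measure on ℝ with mean m(Y) and variance v, where m : E → ℝ is measurable and v > 0 is a constant. Let σ > 0 and K > 0 be constants, let a : E → ℝ be measurable with a(Y) > 0 almost surely, and suppose a(Y)·exp(σX) is integrable. Define d⁻ = (ln(a(Y)/K) + σ·m(Y))/(σ√v) and d⁺ = d⁻ + σ√v. Then, almost surely, E[max(a(Y)·exp(σX) − K, 0) | σ(Y)] = a(Y)·exp(σ·m(Y) + σ²v/2)·Φ(d⁺) − K·Φ(d⁻), where Φ is the cumulative distribution function of the standard normal law. -/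
open MeasureTheory ProbabilityTheory NNReal

/-- The cumulative distribution function `Φ` of the standard normal law. -/
noncomputable def stdNormalCDF (x : ℝ) : ℝ := cdf (gaussianReal 0 1) x

/-! Conditioning on `Y` reduces the claim, through `condExp_prod_ae_eq_integral_condDistrib`, to the
Black–Scholes integral `∫ (A e^{σx} - K)⁺ dN(μ, v)(x)`. The payoff is positive exactly on
`x ≥ log (K / A) / σ`; on that half-line the factor `e^{σx}` turns the density of `N(μ, v)` into
`e^{σμ + σ²v/2}` times the density of `N(μ + σv, v)`, and the two remaining tail probabilities are
values of `Φ` after standardization. -/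

open Set

lemma gaussianReal_map_const_sub_div_sqrt (μ : ℝ) {v : ℝ≥0} (hv : v ≠ 0) :
    (gaussianReal μ v).map (fun x => (μ - x) / √v) = gaussianReal 0 1 := by
  have h : (fun x => (μ - x) / √v) = (· / √(v : ℝ)) ∘ (μ - ·) := rfl
  rw [h, ← Measure.map_map (by fun_prop) (by fun_prop), gaussianReal_map_const_sub,
    gaussianReal_map_div_const, sub_self, zero_div]
  congr
  ext
  simp [Real.sq_sqrt v.coe_nonneg, hv]

lemma gaussianReal_real_Ici (μ c : ℝ) {v : ℝ≥0} (hv : v ≠ 0) :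
    (gaussianReal μ v).real (Ici c) = stdNormalCDF ((μ - c) / √v) := by
  have hpre : (fun x => (μ - x) / √v) ⁻¹' Iic ((μ - c) / √v) = Ici c := by
    ext x
    have hsqrt : 0 < √(v : ℝ) := Real.sqrt_pos.mpr (by positivity)
    simp only [mem_preimage, mem_Iic, mem_Ici, div_le_div_iff_of_pos_right hsqrt]
    constructor <;> intro <;> linarith
  rw [stdNormalCDF, cdf_eq_real, ← gaussianReal_map_const_sub_div_sqrt μ hv,
    map_measureReal_apply (by fun_prop) measurableSet_Iic, hpre]

lemma gaussianPDFReal_mul_exp (μ σ : ℝ) {v : ℝ≥0} (hv : v ≠ 0) (x : ℝ) :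
    gaussianPDFReal μ v x * Real.exp (σ * x)
      = Real.exp (σ * μ + σ ^ 2 * v / 2) * gaussianPDFReal (μ + σ * v) v x := by
  have hv' : (v : ℝ) ≠ 0 := by exact_mod_cast hv
  have hexp : -(x - μ) ^ 2 / (2 * v) + σ * x
      = (σ * μ + σ ^ 2 * v / 2) + -(x - (μ + σ * v)) ^ 2 / (2 * v) := by
    field_simp
    ring
  simp only [gaussianPDFReal]
  rw [mul_assoc, ← Real.exp_add, hexp, Real.exp_add]
  ring

lemma setIntegral_gaussianReal_eq_setIntegral_mul {μ : ℝ} {v : ℝ≥0} (hv : v ≠ 0) (g : ℝ → ℝ)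
    {s : Set ℝ} (hs : MeasurableSet s) :
    ∫ x in s, g x ∂gaussianReal μ v = ∫ x in s, gaussianPDFReal μ v x * g x := by
  rw [← integral_indicator hs, integral_gaussianReal_eq_integral_smul hv,
    ← integral_indicator hs]
  congr with x
  by_cases hx : x ∈ s <;> simp [hx]

lemma setIntegral_exp_mul_gaussianReal (μ σ : ℝ) {v : ℝ≥0} (hv : v ≠ 0) {s : Set ℝ}
    (hs : MeasurableSet s) :
    ∫ x in s, Real.exp (σ * x) ∂gaussianReal μ v
      = Real.exp (σ * μ + σ ^ 2 * v / 2) * (gaussianReal (μ + σ * v) v).real s := by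
  simp_rw [setIntegral_gaussianReal_eq_setIntegral_mul hv _ hs, gaussianPDFReal_mul_exp μ σ hv,
    integral_const_mul, measureReal_def, gaussianReal_apply_eq_integral _ hv,
    ENNReal.toReal_ofReal (setIntegral_nonneg hs fun x _ => gaussianPDFReal_nonneg _ _ x)]

lemma max_zero_eq_indicator_Ici {f : ℝ → ℝ} {c : ℝ} (hf : ∀ x, 0 ≤ f x ↔ c ≤ x) :
    (fun x => max (f x) 0) = (Ici c).indicator f := by
  ext x
  by_cases hx : c ≤ x
  · simp [hx, (hf x).2 hx]
  · simp [hx, le_of_lt (not_le.1 (mt (hf x).1 hx))]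

lemma integral_max_mul_exp_sub_gaussianReal {A K σ : ℝ} (hA : 0 < A) (hK : 0 < K) (hσ : 0 < σ)
    (μ : ℝ) {v : ℝ≥0} (hv : v ≠ 0) :
    ∫ x, max (A * Real.exp (σ * x) - K) 0 ∂gaussianReal μ v
      = A * Real.exp (σ * μ + σ ^ 2 * v / 2) *
          stdNormalCDF ((Real.log (A / K) + σ * μ) / (σ * √v) + σ * √v)
        - K * stdNormalCDF ((Real.log (A / K) + σ * μ) / (σ * √v)) := by
  set c := Real.log (K / A) / σ
  have hnonneg_iff : ∀ x, 0 ≤ A * Real.exp (σ * x) - K ↔ c ≤ x := fun x => by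
    rw [sub_nonneg, ← div_le_iff₀' hA, ← Real.log_le_iff_le_exp (by positivity), div_le_iff₀' hσ]
  have hsqrt : 0 < √(v : ℝ) := Real.sqrt_pos.mpr (by positivity)
  have hlog : Real.log (K / A) = -Real.log (A / K) := by rw [← Real.log_inv, inv_div]
  have hd : (μ - c) / √v = (Real.log (A / K) + σ * μ) / (σ * √v) := by
    simp only [c, hlog]
    field_simp
    ring
  have hd' : (μ + σ * v - c) / √v = (Real.log (A / K) + σ * μ) / (σ * √v) + σ * √v := by
    simp only [c, hlog]
    field_simp
    linear_combination (-σ ^ 2) * Real.sq_sqrt v.coe_nonneg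
  have hint : IntegrableOn (fun x => A * Real.exp (σ * x)) (Ici c) (gaussianReal μ v) :=
    ((integrable_exp_mul_gaussianReal σ).const_mul A).integrableOn
  rw [max_zero_eq_indicator_Ici hnonneg_iff, integral_indicator measurableSet_Ici,
    integral_sub hint (integrable_const K), integral_const_mul,
    setIntegral_exp_mul_gaussianReal μ σ hv measurableSet_Ici, setIntegral_const, smul_eq_mul,
    gaussianReal_real_Ici _ _ hv, gaussianReal_real_Ici _ _ hv, hd, hd']
  ring

theorem condexp_call_payoff_of_condDistrib_gaussian_general
    {Ω : Type*} {m0 : MeasurableSpace Ω} {P : Measure Ω} [IsProbabilityMeasure P]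
    {E : Type*} {mE : MeasurableSpace E} [StandardBorelSpace E] [Nonempty E]
    (Y : Ω → E) (hY : Measurable Y)
    (X : Ω → ℝ) (hX : Measurable X)
    (m : E → ℝ) (v : ℝ≥0) (hv : 0 < v)
    (hGauss : ∀ᵐ ω ∂P, condDistrib X Y P (Y ω) = gaussianReal (m (Y ω)) v)
    (σ K : ℝ) (hσ : 0 < σ) (hK : 0 < K)
    (a : E → ℝ) (ha : Measurable a) (haPos : ∀ᵐ ω ∂P, 0 < a (Y ω))
    (hInt : Integrable (fun ω => a (Y ω) * Real.exp (σ * X ω)) P) :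
    (P[fun ω => max (a (Y ω) * Real.exp (σ * X ω) - K) 0|MeasurableSpace.comap Y mE]) =ᵐ[P]
      fun ω =>
        a (Y ω) * Real.exp (σ * m (Y ω) + σ ^ 2 * (v : ℝ) / 2) *
            stdNormalCDF ((Real.log (a (Y ω) / K) + σ * m (Y ω)) / (σ * Real.sqrt v)
              + σ * Real.sqrt v)
          - K * stdNormalCDF ((Real.log (a (Y ω) / K) + σ * m (Y ω)) / (σ * Real.sqrt v)) := by
  have hpayoff : StronglyMeasurable fun p : E × ℝ => max (a p.1 * Real.exp (σ * p.2) - K) 0 :=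
    Measurable.stronglyMeasurable (by fun_prop)
  refine (condExp_prod_ae_eq_integral_condDistrib hY hX.aemeasurable hpayoff
    (hInt.sub (integrable_const K)).pos_part).trans ?_
  filter_upwards [hGauss, haPos] with ω hω hpos
  rw [hω]
  exact integral_max_mul_exp_sub_gaussianReal hpos hK hσ _ hv.ne'

/-- **Conditional value of a European call (key computation of Corollary 3.4).**
If the regular conditional distribution of `X` given `Y` is a.s. Gaussian with mean `m (Y ω)`
and constant variance `v > 0`, `σ, K > 0`, `a(Y) > 0` a.s. and `a(Y)·exp(σX)` is integrable,
then, with `d⁻ = (ln(a(Y)/K) + σ·m(Y))/(σ√v)` and `d⁺ = d⁻ + σ√v`, a.s.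
`E[max(a(Y)·exp(σX) − K, 0) | σ(Y)] = a(Y)·exp(σ·m(Y) + σ²v/2)·Φ(d⁺) − K·Φ(d⁻)`. -/
theorem condexp_call_payoff_of_condDistrib_gaussian
    {Ω : Type*} {m0 : MeasurableSpace Ω} {P : Measure Ω} [IsProbabilityMeasure P]
    {E : Type*} {mE : MeasurableSpace E} [StandardBorelSpace E] [Nonempty E]
    (Y : Ω → E) (hY : Measurable Y)
    (X : Ω → ℝ) (hX : Measurable X)
    (m : E → ℝ) (hm : Measurable m) (v : ℝ≥0) (hv : 0 < v)
    (hGauss : ∀ᵐ ω ∂P, condDistrib X Y P (Y ω) = gaussianReal (m (Y ω)) v)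
    (σ K : ℝ) (hσ : 0 < σ) (hK : 0 < K)
    (a : E → ℝ) (ha : Measurable a) (haPos : ∀ᵐ ω ∂P, 0 < a (Y ω))
    (hInt : Integrable (fun ω => a (Y ω) * Real.exp (σ * X ω)) P) :
    (P[fun ω => max (a (Y ω) * Real.exp (σ * X ω) - K) 0|MeasurableSpace.comap Y mE]) =ᵐ[P]
      fun ω =>
        a (Y ω) * Real.exp (σ * m (Y ω) + σ ^ 2 * (v : ℝ) / 2) *
            stdNormalCDF ((Real.log (a (Y ω) / K) + σ * m (Y ω)) / (σ * Real.sqrt v)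
              + σ * Real.sqrt v)
          - K * stdNormalCDF ((Real.log (a (Y ω) / K) + σ * m (Y ω)) / (σ * Real.sqrt v)) :=
  condexp_call_payoff_of_condDistrib_gaussian_general (m0 := m0) Y hY X hX m v hv hGauss σ K hσ hK a
    ha haPos hInt
end

section
/- Let a, c, p, C be real numbers with c ≥ 0 and |a| > c. Then there exists a unique x ∈ ℝ such that a·x − c·|x − p| = C. Equivalently, the map h : ℝ → ℝ given by h(x) = a·x − c·|x − p| is a bijection from ℝ to ℝ. -/
/-!
Writing `x = p + t`, the map is `a·p + (a - c)·t` for `t ≥ 0` and `a·p + (a + c)·t` for `t ≤ 0`.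
Since `|c| < |a|`, the slopes `a - c` and `a + c` are nonzero and of the same sign, so the map is
a bijection; quantitatively, the kink `c·|x - p|` is `|c|`-Lipschitz and cannot cancel the
linear part, which gives the injectivity estimate `(|a| - |c|)·|x - y| ≤ |h x - h y|`.
-/

section

variable {α : Type*} [Field α] [LinearOrder α] [IsStrictOrderedRing α]

def netGain (a c p x : α) : α := a * x - c * |x - p|

theorem sub_mul_abs_sub_le_abs_netGain_sub (a c p x y : α) :
    (|a| - |c|) * |x - y| ≤ |netGain a c p x - netGain a c p y| := by
  have hkink : |c * (|x - p| - |y - p|)| ≤ |c| * |x - y| := by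
    rw [abs_mul]
    refine mul_le_mul_of_nonneg_left ?_ (abs_nonneg c)
    simpa using abs_abs_sub_abs_le_abs_sub (x - p) (y - p)
  have hlin : |a| * |x - y| ≤ |netGain a c p x - netGain a c p y| + |c * (|x - p| - |y - p|)| := by
    rw [← abs_mul]
    calc |a * (x - y)|
        = |(netGain a c p x - netGain a c p y) + c * (|x - p| - |y - p|)| := by
          unfold netGain; ring_nf
      _ ≤ _ := abs_add_le _ _
  linarith

variable {a c : α}

theorem netGain_injective (hca : |c| < |a|) (p : α) : Function.Injective (netGain a c p) := by
  intro x y hxy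
  have h := sub_mul_abs_sub_le_abs_netGain_sub a c p x y
  rw [hxy, sub_self, abs_zero] at h
  have : |x - y| ≤ 0 := nonpos_of_mul_nonpos_right h (sub_pos.mpr hca)
  exact sub_eq_zero.mp (abs_nonpos_iff.mp this)

theorem netGain_surjective (hca : |c| < |a|) (p : α) : Function.Surjective (netGain a c p) := by
  intro y
  have hslopes : 0 < (a - c) * (a + c) := by nlinarith [sq_lt_sq.mpr hca]
  have hsub : a - c ≠ 0 := left_ne_zero_of_mul hslopes.ne'
  have hadd : a + c ≠ 0 := right_ne_zero_of_mul hslopes.ne'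
  set z := y - a * p
  by_cases hz : 0 ≤ z / (a - c)
  · refine ⟨p + z / (a - c), ?_⟩
    rw [netGain, add_sub_cancel_left, abs_of_nonneg hz]
    field_simp
    ring
  · have hz' : z / (a + c) ≤ 0 := by
      have : z / (a + c) = z / (a - c) * ((a - c) * (a + c)) / (a + c) ^ 2 := by
        field_simp
      rw [this]
      exact div_nonpos_of_nonpos_of_nonneg
        (mul_nonpos_of_nonpos_of_nonneg (not_le.mp hz).le hslopes.le) (sq_nonneg _)
    refine ⟨p + z / (a + c), ?_⟩
    rw [netGain, add_sub_cancel_left, abs_of_nonpos hz']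
    field_simp
    ring

end

/-- **Well-posedness of the implicit one-step hedging equation.**
If `c ≥ 0` and `|a| > c`, then for every target `C` there is a unique `x` with
`a·x − c·|x − p| = C`; equivalently, `x ↦ a·x − c·|x − p|` is a bijection of `ℝ`. -/
theorem exists_unique_hedging_position
    (a c p C : ℝ) (hc : 0 ≤ c) (hac : c < |a|) :
    (∃! x : ℝ, a * x - c * |x - p| = C) ∧
      Function.Bijective (fun x : ℝ => a * x - c * |x - p|) := by
  have hca : |c| < |a| := by rwa [abs_of_nonneg hc]
  have hbij : Function.Bijective (netGain a c p) :=
    ⟨netGain_injective hca p, netGain_surjective hca p⟩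
  exact ⟨hbij.existsUnique C, hbij⟩
end
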